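/- Let a > 0, let k be a natural number, let t = [−5a, 5a] × [−5a, 5a] and t_r = [5a, 15a] × [−5a, 5a] in ℝ², and let S ⊆ ℝ² be a finite set with 2·|S ∩ t| ≤ k and 2·|S ∩ t_r| ≤ k. Suppose S contains at least one point in each of the six closed balls of radius a centered at (0,0), (2a,0), (4a,0), (6a,0), (8a,0), and (10a,0). Then every s ∈ S ∩ closedBall((0,0), a) and every s' ∈ S ∩ closedBall((10a,0), a) are joined in the k-nearest-neighbor graph NN(S,k) by a path with at most 5 edges. -/

import Mathlib

open Metric

/-- The point `(x, y)` of the Euclidean plane. -/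
def pt (x y : ℝ) : EuclideanSpace ℝ (Fin 2) := !₂[x, y]

/-- The rectangle `[x₀, x₁] × [y₀, y₁]` of the Euclidean plane. -/
def tile (x₀ x₁ y₀ y₁ : ℝ) : Set (EuclideanSpace ℝ (Fin 2)) :=
  {x | x 0 ∈ Set.Icc x₀ x₁ ∧ x 1 ∈ Set.Icc y₀ y₁}

/-- `y` is a `k`-nearest neighbor of `x` in `S`: the number of points `z ∈ S \ {x}` with
`dist x z < dist x y` is strictly less than `k`. -/
def IsKNearest (S : Set (EuclideanSpace ℝ (Fin 2))) (k : ℕ)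
    (x y : EuclideanSpace ℝ (Fin 2)) : Prop :=
  {z ∈ S \ {x} | dist x z < dist x y}.ncard < k

/-- The `k`-nearest-neighbor graph on a set `S` of points of the Euclidean plane: distinct
points `x, y ∈ S` are adjacent iff `y` is a `k`-nearest neighbor of `x` or `x` is a
`k`-nearest neighbor of `y`. -/
def NNGraph (S : Set (EuclideanSpace ℝ (Fin 2))) (k : ℕ) : SimpleGraph S where
  Adj x y := x ≠ y ∧
    (IsKNearest S k (x : EuclideanSpace ℝ (Fin 2)) (y : EuclideanSpace ℝ (Fin 2)) ∨
     IsKNearest S k (y : EuclideanSpace ℝ (Fin 2)) (x : EuclideanSpace ℝ (Fin 2)))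
  symm := by
    constructor
    intro x y ⟨hne, h⟩
    exact ⟨hne.symm, h.symm⟩
  loopless := by
    constructor
    intro x ⟨hne, _⟩
    exact hne rfl

/-!
Consecutive points of the chain `s, p₂, p₄, p₆, p₈, s'` (with `pᵢ` in the ball of radius `a`
around `(i a, 0)`) are within `4a` of each other. For a point `x` in the ball around `(c, 0)`
with `0 ≤ c ≤ 10a`, the closed ball of radius `4a` around `x` lies in
`closedBall (c, 0) (5a) ⊆ t ∪ t_r`, which contains at most `k` points of `S` counting `x`
itself; so fewer than `k` points of `S \ {x}` are closer to `x` than its successor, and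
every step of the chain is an edge of `NN(S, k)` or trivial.
-/

lemma dist_pt_pt_zero (x y : ℝ) : dist (pt x 0) (pt y 0) = |x - y| := by
  simp [EuclideanSpace.dist_eq, Fin.sum_univ_two, pt, Real.dist_eq, Real.sqrt_sq_eq_abs]

lemma closedBall_pt_subset_tile (c d r : ℝ) :
    closedBall (pt c d) r ⊆ tile (c - r) (c + r) (d - r) (d + r) := by
  intro x hx
  have h0 := (PiLp.dist_apply_le x (pt c d) 0).trans hx
  have h1 := (PiLp.dist_apply_le x (pt c d) 1).trans hx
  simp only [pt, PiLp.toLp_apply, Matrix.cons_val_zero, Matrix.cons_val_one, Real.dist_eq,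
    abs_le] at h0 h1
  exact ⟨⟨by linarith, by linarith⟩, ⟨by linarith, by linarith⟩⟩

lemma tile_mono {x₀ x₁ y₀ y₁ x₀' x₁' y₀' y₁' : ℝ} (hx₀ : x₀' ≤ x₀) (hx₁ : x₁ ≤ x₁')
    (hy₀ : y₀' ≤ y₀) (hy₁ : y₁ ≤ y₁') : tile x₀ x₁ y₀ y₁ ⊆ tile x₀' x₁' y₀' y₁' :=
  fun _ ⟨⟨h₀, h₁⟩, ⟨h₂, h₃⟩⟩ => ⟨⟨hx₀.trans h₀, h₁.trans hx₁⟩, ⟨hy₀.trans h₂, h₃.trans hy₁⟩⟩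

lemma tile_subset_union (x₀ x₁ x₂ y₀ y₁ : ℝ) :
    tile x₀ x₂ y₀ y₁ ⊆ tile x₀ x₁ y₀ y₁ ∪ tile x₁ x₂ y₀ y₁ := by
  rintro x ⟨⟨h₀, h₂⟩, hy⟩
  rcases le_total (x 0) x₁ with h | h
  · exact Or.inl ⟨⟨h₀, h⟩, hy⟩
  · exact Or.inr ⟨⟨h, h₂⟩, hy⟩

lemma isKNearest_of_ncard_closedBall_le {S : Set (EuclideanSpace ℝ (Fin 2))} {k : ℕ}
    {x y : EuclideanSpace ℝ (Fin 2)} (hS : S.Finite) (hx : x ∈ S)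
    (hk : (S ∩ closedBall x (dist x y)).ncard ≤ k) : IsKNearest S k x y := by
  set T := {z ∈ S \ {x} | dist x z < dist x y}
  have hxT : x ∉ T := fun h => h.1.2 rfl
  have hsub : insert x T ⊆ S ∩ closedBall x (dist x y) := by
    rintro z (rfl | ⟨⟨hz, -⟩, hzd⟩)
    · exact ⟨hx, mem_closedBall_self dist_nonneg⟩
    · exact ⟨hz, by rw [mem_closedBall, dist_comm]; exact hzd.le⟩
  have hle := Set.ncard_le_ncard hsub (hS.inter_of_left _)
  rw [Set.ncard_insert_of_notMem hxT (hS.subset fun z hz => hz.1.1)] at hle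
  exact hle.trans hk

lemma NNGraph.exists_walk_length_le_one {S : Set (EuclideanSpace ℝ (Fin 2))} {k : ℕ} {x y : S}
    (h : IsKNearest S k x y ∨ IsKNearest S k y x) :
    ∃ w : (NNGraph S k).Walk x y, w.length ≤ 1 := by
  rcases eq_or_ne x y with rfl | hxy
  · exact ⟨.nil, zero_le_one⟩
  · exact ⟨.cons ⟨hxy, h⟩ .nil, le_rfl⟩

lemma isKNearest_of_mem_closedBall_pt {a c c' : ℝ} {k : ℕ} {S : Set (EuclideanSpace ℝ (Fin 2))}
    (hS : S.Finite)
    (hcard : 2 * (S ∩ tile (-(5*a)) (5*a) (-(5*a)) (5*a)).ncard ≤ k)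
    (hcard' : 2 * (S ∩ tile (5*a) (15*a) (-(5*a)) (5*a)).ncard ≤ k)
    (hc : 0 ≤ c) (hc' : c ≤ 10*a) (hcc' : |c - c'| ≤ 2*a)
    {x y : EuclideanSpace ℝ (Fin 2)} (hx : x ∈ S) (hxc : x ∈ closedBall (pt c 0) a)
    (hyc' : y ∈ closedBall (pt c' 0) a) : IsKNearest S k x y := by
  rw [mem_closedBall] at hxc hyc'
  have hxy : dist x y ≤ dist x (pt c 0) + 3*a := by
    have := dist_triangle4 x (pt c 0) (pt c' 0) y
    rw [dist_pt_pt_zero, dist_comm (pt c' 0)] at this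
    linarith
  have hball : closedBall x (dist x y) ⊆
      tile (-(5*a)) (5*a) (-(5*a)) (5*a) ∪ tile (5*a) (15*a) (-(5*a)) (5*a) :=
    (closedBall_subset_closedBall' (by linarith : dist x y + dist x (pt c 0) ≤ 5*a)).trans <|
      (closedBall_pt_subset_tile c 0 (5*a)).trans <|
      (tile_mono (by linarith) (by linarith) (by linarith) (by linarith)).trans <|
      tile_subset_union _ _ _ _ _
  refine isKNearest_of_ncard_closedBall_le hS hx ?_
  calc (S ∩ closedBall x (dist x y)).ncard
      ≤ (S ∩ tile (-(5*a)) (5*a) (-(5*a)) (5*a) ∪ S ∩ tile (5*a) (15*a) (-(5*a)) (5*a)).ncard := by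
        rw [← Set.inter_union_distrib_left]
        exact Set.ncard_le_ncard (Set.inter_subset_inter_right S hball) (hS.inter_of_left _)
    _ ≤ (S ∩ tile (-(5*a)) (5*a) (-(5*a)) (5*a)).ncard +
          (S ∩ tile (5*a) (15*a) (-(5*a)) (5*a)).ncard := Set.ncard_union_le _ _
    _ ≤ k := by omega

theorem stmt_11_general (a : ℝ) (k : ℕ) (S : Set (EuclideanSpace ℝ (Fin 2)))
    (hS : S.Finite)
    (hcard : 2 * (S ∩ tile (-(5*a)) (5*a) (-(5*a)) (5*a)).ncard ≤ k)
    (hcard' : 2 * (S ∩ tile (5*a) (15*a) (-(5*a)) (5*a)).ncard ≤ k)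
    (h2 : (S ∩ closedBall (pt (2*a) 0) a).Nonempty)
    (h4 : (S ∩ closedBall (pt (4*a) 0) a).Nonempty)
    (h6 : (S ∩ closedBall (pt (6*a) 0) a).Nonempty)
    (h8 : (S ∩ closedBall (pt (8*a) 0) a).Nonempty) :
    ∀ s, ∀ hs : s ∈ S, s ∈ closedBall (pt 0 0) a →
    ∀ s', ∀ hs' : s' ∈ S, s' ∈ closedBall (pt (10*a) 0) a →
      ∃ w : (NNGraph S k).Walk ⟨s, hs⟩ ⟨s', hs'⟩, w.length ≤ 5 := by
  intro s hs hs₀ s' hs' hs'₁₀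
  have ha : 0 ≤ a := dist_nonneg.trans hs₀
  have hop : ∀ c c' : ℝ, c' = c + 2*a → 0 ≤ c → c ≤ 8*a → ∀ x y : S,
      (x : EuclideanSpace ℝ (Fin 2)) ∈ closedBall (pt c 0) a →
      (y : EuclideanSpace ℝ (Fin 2)) ∈ closedBall (pt c' 0) a →
      ∃ w : (NNGraph S k).Walk x y, w.length ≤ 1 := by
    rintro c _ rfl hc hc' x y hxc hyc'
    exact NNGraph.exists_walk_length_le_one <| Or.inl <|
      isKNearest_of_mem_closedBall_pt hS hcard hcard' hc (by linarith)
        (abs_sub_le_iff.mpr ⟨by linarith, by linarith⟩) x.2 hxc hyc'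
  obtain ⟨p₂, hp₂, hp₂c⟩ := h2
  obtain ⟨p₄, hp₄, hp₄c⟩ := h4
  obtain ⟨p₆, hp₆, hp₆c⟩ := h6
  obtain ⟨p₈, hp₈, hp₈c⟩ := h8
  obtain ⟨w₁, hw₁⟩ := hop 0 (2*a) (by ring) le_rfl (by linarith) ⟨s, hs⟩ ⟨p₂, hp₂⟩ hs₀ hp₂c
  obtain ⟨w₂, hw₂⟩ := hop (2*a) (4*a) (by ring) (by linarith) (by linarith)
    ⟨p₂, hp₂⟩ ⟨p₄, hp₄⟩ hp₂c hp₄c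
  obtain ⟨w₃, hw₃⟩ := hop (4*a) (6*a) (by ring) (by linarith) (by linarith)
    ⟨p₄, hp₄⟩ ⟨p₆, hp₆⟩ hp₄c hp₆c
  obtain ⟨w₄, hw₄⟩ := hop (6*a) (8*a) (by ring) (by linarith) (by linarith)
    ⟨p₆, hp₆⟩ ⟨p₈, hp₈⟩ hp₆c hp₈c
  obtain ⟨w₅, hw₅⟩ := hop (8*a) (10*a) (by ring) (by linarith) le_rfl
    ⟨p₈, hp₈⟩ ⟨s', hs'⟩ hp₈c hs'₁₀
  refine ⟨w₁.append (w₂.append (w₃.append (w₄.append w₅))), ?_⟩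
  simp only [SimpleGraph.Walk.length_append]
  omega

/-- Let `a > 0`, `k : ℕ`, `t = [-5a,5a] × [-5a,5a]`, `t_r = [5a,15a] × [-5a,5a]`, and let
`S` be a finite set with `2|S ∩ t| ≤ k` and `2|S ∩ t_r| ≤ k` which meets each of the six
closed balls of radius `a` centered at `(0,0)`, `(2a,0)`, `(4a,0)`, `(6a,0)`, `(8a,0)` and
`(10a,0)`. Then every `s ∈ S ∩ closedBall((0,0),a)` and `s' ∈ S ∩ closedBall((10a,0),a)`
are joined in the `k`-nearest-neighbor graph `NNGraph S k` by a path (walk) with at most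
5 edges. -/
theorem stmt_11 (a : ℝ) (ha : 0 < a) (k : ℕ) (S : Set (EuclideanSpace ℝ (Fin 2)))
    (hS : S.Finite)
    (hcard : 2 * (S ∩ tile (-(5*a)) (5*a) (-(5*a)) (5*a)).ncard ≤ k)
    (hcard' : 2 * (S ∩ tile (5*a) (15*a) (-(5*a)) (5*a)).ncard ≤ k)
    (h0 : (S ∩ closedBall (pt 0 0) a).Nonempty)
    (h2 : (S ∩ closedBall (pt (2*a) 0) a).Nonempty)
    (h4 : (S ∩ closedBall (pt (4*a) 0) a).Nonempty)
    (h6 : (S ∩ closedBall (pt (6*a) 0) a).Nonempty)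
    (h8 : (S ∩ closedBall (pt (8*a) 0) a).Nonempty)
    (h10 : (S ∩ closedBall (pt (10*a) 0) a).Nonempty) :
    ∀ s, ∀ hs : s ∈ S, s ∈ closedBall (pt 0 0) a →
    ∀ s', ∀ hs' : s' ∈ S, s' ∈ closedBall (pt (10*a) 0) a →
      ∃ w : (NNGraph S k).Walk ⟨s, hs⟩ ⟨s', hs'⟩, w.length ≤ 5 :=
  stmt_11_general a k S hS hcard hcard' h2 h4 h6 h8
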